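/- arXiv:2012.06471 — 4 statements merged into one kernel-verified Lean document; each statement's English description precedes it below -/
import Mathlib

section
/- For a completely positive semidefinite matrix A of size n, cpsd-rank_G(A) ≤ cpsd-rank(A) ≤ n · cpsd-rank_G(A). -/
/-!
A Gram representation by psd matrices of size `d` has ranks at most `d`, which gives the first
inequality. For the second, factor each `Xᵢ = Bᵢ Bᵢᴴ` with `Bᵢ` of width `r ≥ rank Xᵢ`; the value
`tr (Xᵢ Xⱼ) = ‖Bᵢᴴ Bⱼ‖²` only depends on the blocks `Bᵢᴴ Bⱼ` of the Gram matrix `Cᴴ C` of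
`C = [B₁ ⋯ Bₙ]`. That Gram matrix is also `Hᴴ H` for its square root `H`, of size `n r`, so the
column blocks `Gᵢ` of `H` give the representation `Yᵢ = Gᵢ Gᵢᴴ` in size `n r`.
-/

/-- The cpsd-rank of `A`: the smallest `d` such that `A` has a Gram representation
by psd matrices of size `d`. -/
noncomputable def cpsdRank {n : ℕ} (A : Matrix (Fin n) (Fin n) ℝ) : ℕ :=
  sInf {d : ℕ | ∃ f : Fin n → Matrix (Fin d) (Fin d) ℝ,
    (∀ i, (f i).PosSemidef) ∧ ∀ i j, A i j = ((f i) * (f j)).trace}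

/-- The Gram-cpsd-rank of `A`: the smallest `r` such that `A` has a Gram representation
by psd matrices (of some size `d`), each of rank at most `r`. -/
noncomputable def cpsdRankG {n : ℕ} (A : Matrix (Fin n) (Fin n) ℝ) : ℕ :=
  sInf {r : ℕ | ∃ (d : ℕ) (f : Fin n → Matrix (Fin d) (Fin d) ℝ),
    (∀ i, (f i).PosSemidef) ∧ (∀ i, (f i).rank ≤ r) ∧
    ∀ i j, A i j = ((f i) * (f j)).trace}

open Matrix
open scoped ComplexOrder

namespace Matrix

lemma exists_mul_conjTranspose_eq_of_card_le {m k α : Type*} [Fintype k] [DecidableEq k]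
    [Semiring α] [StarRing α] (B : Matrix m k α) (s : Finset k) (hB : ∀ x, ∀ j ∉ s, B x j = 0)
    {r : ℕ} (hs : s.card ≤ r) : ∃ B' : Matrix m (Fin r) α, B' * B'ᴴ = B * Bᴴ := by
  obtain ⟨t⟩ : Nonempty (s ↪ Fin r) := Function.Embedding.nonempty_of_card_le (by simpa using hs)
  let C : Matrix m s α := B.submatrix id (↑)
  let P : Matrix s (Fin r) α := (1 : Matrix (Fin r) (Fin r) α).submatrix t id
  have hP : P * Pᴴ = 1 := by
    rw [conjTranspose_submatrix, conjTranspose_one, ← submatrix_mul _ _ _ _ _ Function.bijective_id,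
      one_mul, submatrix_one_embedding]
  have hC : C * Cᴴ = B * Bᴴ := by
    ext x y
    simp only [C, mul_apply, submatrix_apply, id, conjTranspose_apply]
    rw [Finset.sum_coe_sort s (fun j => B x j * star (B y j))]
    exact Finset.sum_subset (Finset.subset_univ s) fun j _ hj => by simp [hB x j hj]
  refine ⟨C * P, ?_⟩
  rw [conjTranspose_mul, Matrix.mul_assoc, ← Matrix.mul_assoc P, hP, Matrix.one_mul, hC]

lemma PosSemidef.exists_eq_mul_conjTranspose_of_rank_le {m 𝕜 : Type*} [Fintype m] [DecidableEq m]
    [RCLike 𝕜] {M : Matrix m m 𝕜} (hM : M.PosSemidef) {r : ℕ} (hr : M.rank ≤ r) :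
    ∃ B : Matrix m (Fin r) 𝕜, M = B * Bᴴ := by
  let μ := hM.1.eigenvalues
  let U : Matrix m m 𝕜 := hM.1.eigenvectorUnitary
  let D : Matrix m m 𝕜 := diagonal fun j => (√(μ j) : 𝕜)
  have hD : D * Dᴴ = diagonal (RCLike.ofReal ∘ μ) := by
    rw [diagonal_conjTranspose, diagonal_mul_diagonal]
    congr 1; funext j
    simp [← RCLike.ofReal_mul, Real.mul_self_sqrt (hM.eigenvalues_nonneg j), μ]
  have hMB : M = U * D * (U * D)ᴴ := by
    rw [conjTranspose_mul, Matrix.mul_assoc, ← Matrix.mul_assoc D, hD]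
    exact hM.1.spectral_theorem.trans
      (by simp [Unitary.conjStarAlgAut_apply, star_eq_conjTranspose, Matrix.mul_assoc, U, μ])
  obtain ⟨B, hB⟩ := (U * D).exists_mul_conjTranspose_eq_of_card_le {j | μ j ≠ 0}
    (fun x j hj => by simp_all [D, mul_diagonal])
    (by simpa [hM.1.rank_eq_card_non_zero_eigs, Fintype.card_subtype] using hr)
  exact ⟨B, hMB.trans hB.symm⟩

open scoped MatrixOrder in
lemma exists_conjTranspose_mul_self_eq {k m 𝕜 : Type*} [Fintype k] [Fintype m] [DecidableEq m]
    [RCLike 𝕜] (C : Matrix k m 𝕜) : ∃ H : Matrix m m 𝕜, Hᴴ * H = Cᴴ * C := by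
  have hH : (CFC.sqrt (Cᴴ * C)).PosSemidef := (CFC.sqrt_nonneg _).posSemidef
  refine ⟨CFC.sqrt (Cᴴ * C), ?_⟩
  rw [hH.1.eq, CFC.sqrt_mul_sqrt_self _ (posSemidef_conjTranspose_mul_self C).nonneg]

lemma conjTranspose_submatrix_mul_submatrix {k m ι α : Type*} [Fintype k]
    [NonUnitalNonAssocSemiring α] [StarRing α] (N : Matrix k m α) (e f : ι → m) :
    (N.submatrix id e)ᴴ * N.submatrix id f = (Nᴴ * N).submatrix e f := by
  rw [conjTranspose_submatrix, ← submatrix_mul _ _ _ _ _ Function.bijective_id]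

lemma trace_mul_conjTranspose_mul_mul_conjTranspose {m a b R : Type*} [Fintype m] [Fintype a]
    [Fintype b] [CommSemiring R] [StarRing R] (P : Matrix m a R) (Q : Matrix m b R) :
    (P * Pᴴ * (Q * Qᴴ)).trace = (Pᴴ * Q * (Pᴴ * Q)ᴴ).trace := by
  rw [conjTranspose_mul, conjTranspose_conjTranspose, Matrix.mul_assoc, trace_mul_comm]
  simp only [Matrix.mul_assoc]

lemma trace_submatrix_equiv {m n R : Type*} [Fintype m] [Fintype n] [AddCommMonoid R]
    (M : Matrix m m R) (e : n ≃ m) : (M.submatrix e e).trace = M.trace :=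
  e.sum_comp M.diag

lemma exists_posSemidef_trace_mul_eq_of_rank_le {ι m 𝕜 : Type*} [Fintype ι] [DecidableEq ι]
    [Fintype m] [DecidableEq m] [RCLike 𝕜] (X : ι → Matrix m m 𝕜) (hX : ∀ i, (X i).PosSemidef)
    {r : ℕ} (hr : ∀ i, (X i).rank ≤ r) :
    ∃ Y : ι → Matrix (ι × Fin r) (ι × Fin r) 𝕜,
      (∀ i, (Y i).PosSemidef) ∧ ∀ i j, (Y i * Y j).trace = (X i * X j).trace := by
  choose B hB using fun i => (hX i).exists_eq_mul_conjTranspose_of_rank_le (hr i)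
  obtain ⟨H, hH⟩ := exists_conjTranspose_mul_self_eq (of fun x (p : ι × Fin r) => B p.1 x p.2)
  let G (i : ι) : Matrix (ι × Fin r) (Fin r) 𝕜 := H.submatrix id (i, ·)
  have hG : ∀ i j, (G i)ᴴ * G j = (B i)ᴴ * B j := fun i j => by
    rw [conjTranspose_submatrix_mul_submatrix, hH, ← conjTranspose_submatrix_mul_submatrix]
    rfl
  refine ⟨fun i => G i * (G i)ᴴ, fun i => posSemidef_self_mul_conjTranspose _, fun i j => ?_⟩
  rw [hB i, hB j, trace_mul_conjTranspose_mul_mul_conjTranspose,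
    trace_mul_conjTranspose_mul_mul_conjTranspose, hG]

end Matrix

section Gram

variable {n : ℕ} {A : Matrix (Fin n) (Fin n) ℝ}

lemma cpsdRank_le {d : ℕ} (f : Fin n → Matrix (Fin d) (Fin d) ℝ) (hf : ∀ i, (f i).PosSemidef)
    (hA : ∀ i j, A i j = (f i * f j).trace) : cpsdRank A ≤ d :=
  Nat.sInf_le ⟨f, hf, hA⟩

lemma cpsdRankG_le {d r : ℕ} (f : Fin n → Matrix (Fin d) (Fin d) ℝ) (hf : ∀ i, (f i).PosSemidef)
    (hr : ∀ i, (f i).rank ≤ r) (hA : ∀ i j, A i j = (f i * f j).trace) : cpsdRankG A ≤ r :=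
  Nat.sInf_le ⟨d, f, hf, hr, hA⟩

variable (hA : ∃ (d : ℕ) (f : Fin n → Matrix (Fin d) (Fin d) ℝ),
  (∀ i, (f i).PosSemidef) ∧ ∀ i j, A i j = (f i * f j).trace)
include hA

lemma exists_gram_cpsdRank : ∃ f : Fin n → Matrix (Fin (cpsdRank A)) (Fin (cpsdRank A)) ℝ,
    (∀ i, (f i).PosSemidef) ∧ ∀ i j, A i j = (f i * f j).trace :=
  Nat.sInf_mem hA

lemma exists_gram_cpsdRankG : ∃ (d : ℕ) (f : Fin n → Matrix (Fin d) (Fin d) ℝ),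
    (∀ i, (f i).PosSemidef) ∧ (∀ i, (f i).rank ≤ cpsdRankG A) ∧
      ∀ i j, A i j = (f i * f j).trace := by
  obtain ⟨d, f, hf, hAf⟩ := hA
  have hne : ∃ (r d : ℕ) (f : Fin n → Matrix (Fin d) (Fin d) ℝ), (∀ i, (f i).PosSemidef) ∧
      (∀ i, (f i).rank ≤ r) ∧ ∀ i j, A i j = (f i * f j).trace :=
    ⟨d, d, f, hf, fun i => rank_le_width _, hAf⟩
  exact Nat.sInf_mem hne

end Gram

theorem cpsdRankG_le_cpsdRank_le_mul {n : ℕ} (A : Matrix (Fin n) (Fin n) ℝ)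
    (hA : ∃ (d : ℕ) (f : Fin n → Matrix (Fin d) (Fin d) ℝ),
      (∀ i, (f i).PosSemidef) ∧ ∀ i j, A i j = ((f i) * (f j)).trace) :
    cpsdRankG A ≤ cpsdRank A ∧ cpsdRank A ≤ n * cpsdRankG A := by
  obtain ⟨f, hf, hAf⟩ := exists_gram_cpsdRank hA
  obtain ⟨d, g, hg, hgr, hAg⟩ := exists_gram_cpsdRankG hA
  obtain ⟨Y, hY, hYg⟩ := exists_posSemidef_trace_mul_eq_of_rank_le g hg hgr
  let e : Fin (n * cpsdRankG A) ≃ Fin n × Fin (cpsdRankG A) := finProdFinEquiv.symm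
  refine ⟨cpsdRankG_le f hf (fun i => rank_le_width _) hAf,
    cpsdRank_le (fun i => (Y i).submatrix e e) (fun i => (hY i).submatrix e) fun i j => ?_⟩
  rw [submatrix_mul_equiv, trace_submatrix_equiv, hYg, hAg]
end

section
/- For every n, r ≥ 1, the set CPSD^n_{≤r} of n×n matrices admitting a Gram representation by positive semidefinite r×r matrices is a closed subset of the space of real symmetric n×n matrices. -/
/-!
The set is the image of the closed set of tuples of positive semidefinite matrices under the
continuous map `f ↦ (tr (f i * f j))ᵢⱼ`. This map is proper on that set: for symmetric `f i`
every squared entry of `f i` is at most `tr (f i * f i)`, a diagonal entry of the image, so the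
preimage of a compact set is bounded. Proper maps into a locally compact Hausdorff space are
closed.
-/

open Set Matrix

theorem isClosed_image_of_isCompact_inter_preimage {X Y : Type*} [TopologicalSpace X]
    [TopologicalSpace Y] [T2Space Y] [CompactlyCoherentSpace Y] {f : X → Y} {s : Set X}
    (hf : Continuous f) (h : ∀ K, IsCompact K → IsCompact (s ∩ f ⁻¹' K)) :
    IsClosed (f '' s) := by
  have : IsProperMap (s.domRestrict f) := by
    refine isProperMap_iff_isCompact_preimage.2 ⟨hf.comp continuous_subtype_val, fun K hK => ?_⟩
    rw [Subtype.isCompact_iff]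
    exact (Subtype.image_preimage_coe s (f ⁻¹' K)).symm ▸ h K hK
  rw [← range_domRestrict]
  exact this.isClosedMap.isClosed_range

namespace Matrix

section PosSemidef

variable {n R : Type*} [Fintype n] [Ring R] [PartialOrder R] [StarRing R] [TopologicalSpace R]
  [IsTopologicalRing R] [ContinuousStar R] [OrderClosedTopology R]

theorem isClosed_setOf_posSemidef : IsClosed {M : Matrix n n R | M.PosSemidef} := by
  simp_rw [posSemidef_iff_dotProduct_mulVec, ofPred_and, ofPred_forall]
  exact (isClosed_eq continuous_id.matrix_conjTranspose continuous_id).inter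
    (isClosed_iInter fun x => isClosed_le continuous_const
      (continuous_const.dotProduct (continuous_id.matrix_mulVec continuous_const)))

end PosSemidef

section SquareBound

variable {m n R : Type*} [Fintype m] [Fintype n] [Ring R] [LinearOrder R]
  [IsOrderedRing R]

theorem sq_le_trace_transpose_mul_self (A : Matrix m n R) (i : m) (j : n) :
    A i j ^ 2 ≤ (Aᵀ * A).trace := by
  rw [← vec_dotProduct_vec, sq]
  exact Finset.single_le_sum (f := fun k => vec A k * vec A k) (fun k _ => mul_self_nonneg _)
    (Finset.mem_univ (j, i))

theorem IsHermitian.sq_apply_le_trace_mul_self [Star R] [TrivialStar R] {A : Matrix n n R}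
    (hA : A.IsHermitian) (i j : n) : A i j ^ 2 ≤ (A * A).trace := by
  have h := sq_le_trace_transpose_mul_self A i j
  rwa [← conjTranspose_eq_transpose_of_trivial, hA.eq] at h

end SquareBound

end Matrix

section TraceGram

variable {ι m : Type*} [Fintype m]

def traceGram (f : ι → Matrix m m ℝ) : Matrix ι ι ℝ :=
  of fun i j => (f i * f j).trace

theorem continuous_traceGram :
    Continuous (traceGram : (ι → Matrix m m ℝ) → Matrix ι ι ℝ) :=
  continuous_pi fun i => continuous_pi fun j =>
    ((continuous_apply i).matrix_mul (continuous_apply j)).matrix_trace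

theorem isCompact_posSemidef_inter_traceGram_preimage {K : Set (Matrix ι ι ℝ)}
    (hK : IsCompact K) :
    IsCompact ({f : ι → Matrix m m ℝ | ∀ i, (f i).PosSemidef} ∩ traceGram ⁻¹' K) := by
  have hpsd_closed : IsClosed {f : ι → Matrix m m ℝ | ∀ i, (f i).PosSemidef} := by
    rw [ofPred_forall]
    exact isClosed_iInter fun i => isClosed_setOf_posSemidef.preimage
      (continuous_apply (A := fun _ : ι => Matrix m m ℝ) i)
  have hclosed := hpsd_closed.inter (hK.isClosed.preimage continuous_traceGram)
  have hbdd : ∀ i, BddAbove ((fun M : Matrix ι ι ℝ => M i i) '' K) := fun i =>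
    (hK.image ((continuous_apply i).comp (continuous_apply i))).bddAbove
  choose C hC using hbdd
  let box : Set (ι → Matrix m m ℝ) := univ.pi fun i => univ.pi fun _ => univ.pi fun _ =>
    Icc (-√(C i)) √(C i)
  have hbox : IsCompact box :=
    isCompact_univ_pi fun _ => isCompact_univ_pi fun _ => isCompact_univ_pi fun _ => isCompact_Icc
  refine hbox.of_isClosed_subset hclosed ?_
  rintro f ⟨hpsd, hfK⟩ i - a - b -
  refine abs_le.1 (Real.abs_le_sqrt ?_)
  calc f i a b ^ 2 ≤ (f i * f i).trace := (hpsd i).1.sq_apply_le_trace_mul_self a b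
    _ ≤ C i := hC i ⟨_, hfK, rfl⟩

theorem isClosed_image_traceGram_posSemidef [Finite ι] :
    IsClosed (traceGram '' {f : ι → Matrix m m ℝ | ∀ i, (f i).PosSemidef}) := by
  have : CompactlyCoherentSpace (Matrix ι ι ℝ) :=
    inferInstanceAs (CompactlyCoherentSpace (ι → ι → ℝ))
  exact isClosed_image_of_isCompact_inter_preimage continuous_traceGram
    fun _ => isCompact_posSemidef_inter_traceGram_preimage

end TraceGram

theorem cpsd_le_r_isClosed_general (n r : ℕ) :
    IsClosed {A : Matrix (Fin n) (Fin n) ℝ |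
      ∃ f : Fin n → Matrix (Fin r) (Fin r) ℝ,
        (∀ i, (f i).PosSemidef) ∧ ∀ i j, A i j = ((f i) * (f j)).trace} := by
  convert isClosed_image_traceGram_posSemidef (ι := Fin n) (m := Fin r) using 1
  ext A
  simp [traceGram, ← Matrix.ext_iff, eq_comm]

theorem cpsd_le_r_isClosed (n r : ℕ) (hn : 1 ≤ n) (hr : 1 ≤ r) :
    IsClosed {A : Matrix (Fin n) (Fin n) ℝ |
      ∃ f : Fin n → Matrix (Fin r) (Fin r) ℝ,
        (∀ i, (f i).PosSemidef) ∧ ∀ i j, A i j = ((f i) * (f j)).trace} :=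
  cpsd_le_r_isClosed_general n r
end

section
/- Low-rank approximation of psd matrices: for every A ∈ S_+^d and every ε > 0, there exists B ∈ S_+^d with tr(B) = tr(A), ‖A − B‖_F < ε, and rank(B) ≤ ⌈tr(A)²/ε²⌉. -/
/-!
Diagonalize `A = U diag(λ) Uᴴ`, keep the `k = ⌈tr(A)²/ε²⌉` largest eigenvalues and spread the
discarded mass `s` evenly over them. This preserves the trace and positivity and leaves rank at
most `k`. The squared Frobenius error is `s²/k + ∑ λⱼ²` over the discarded `j`; as each discarded
eigenvalue is at most the mean of the kept ones, `k · error² ≤ s · tr A < tr(A)² ≤ k ε²`.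
-/

open Finset

theorem Finset.exists_card_eq_forall_notMem_le {ι β : Type*} [Fintype ι] [DecidableEq ι]
    [LinearOrder β] (f : ι → β) {k : ℕ} (hk : k ≤ Fintype.card ι) :
    ∃ S : Finset ι, #S = k ∧ ∀ i ∈ S, ∀ j ∉ S, f j ≤ f i := by
  induction k with
  | zero => exact ⟨∅, rfl, by simp⟩
  | succ k ih =>
    obtain ⟨S, hcard, htop⟩ := ih (by omega)
    have hSc : Sᶜ.Nonempty := by rw [← card_pos, card_compl, hcard]; omega
    obtain ⟨x, hxS, hmax⟩ := exists_max_image Sᶜ f hSc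
    rw [mem_compl] at hxS
    refine ⟨insert x S, by rw [card_insert_of_notMem hxS, hcard], fun i hi j hj => ?_⟩
    have hjS : j ∉ S := fun h => hj (mem_insert_of_mem h)
    rcases mem_insert.mp hi with rfl | hi
    · exact hmax j (mem_compl.mpr hjS)
    · exact htop i hi j hjS

namespace Finset

variable {ι : Type*} {S : Finset ι} {f : ι → ℝ}

theorem card_mul_le_sum_of_notMem (htop : ∀ i ∈ S, ∀ j ∉ S, f j ≤ f i) {j : ι} (hj : j ∉ S) :
    #S * f j ≤ ∑ i ∈ S, f i := by
  simpa using card_nsmul_le_sum S f (f j) fun i hi => htop i hi j hj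

variable [Fintype ι] [DecidableEq ι]

noncomputable def truncateSpread (S : Finset ι) (f : ι → ℝ) : ι → ℝ :=
  fun i => if i ∈ S then f i + (∑ j ∈ Sᶜ, f j) / #S else 0

theorem truncateSpread_nonneg (hf : 0 ≤ f) : 0 ≤ truncateSpread S f := fun i => by
  unfold truncateSpread
  split_ifs
  · exact add_nonneg (hf i) (div_nonneg (sum_nonneg fun j _ => hf j) (Nat.cast_nonneg _))
  · rfl

theorem card_truncateSpread_ne_zero_le :
    Fintype.card {i // truncateSpread S f i ≠ 0} ≤ #S := by
  rw [Fintype.card_subtype]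
  refine card_le_card fun i hi => ?_
  by_contra hiS
  simp [truncateSpread, hiS] at hi

theorem sum_truncateSpread (hS : S.Nonempty) : ∑ i, truncateSpread S f i = ∑ i, f i := by
  have hS' : (#S : ℝ) ≠ 0 := by exact_mod_cast hS.card_pos.ne'
  simp only [truncateSpread]
  rw [sum_ite_mem, univ_inter, sum_add_distrib, sum_const, nsmul_eq_mul,
    mul_div_cancel₀ _ hS', sum_add_sum_compl]

theorem sum_compl_lt_sum (htop : ∀ i ∈ S, ∀ j ∉ S, f j ≤ f i) (hS : S.Nonempty)
    (hpos : 0 < ∑ i, f i) : ∑ j ∈ Sᶜ, f j < ∑ i, f i := by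
  rw [← sum_add_sum_compl S f] at hpos ⊢
  by_contra! hle
  have hkept : ∑ i ∈ S, f i ≤ 0 := by linarith
  have hcompl : #S * ∑ j ∈ Sᶜ, f j ≤ #Sᶜ * ∑ i ∈ S, f i := by
    rw [mul_sum, ← nsmul_eq_mul, ← sum_const]
    exact sum_le_sum fun j hj => card_mul_le_sum_of_notMem htop (mem_compl.1 hj)
  have hdropped : ∑ j ∈ Sᶜ, f j ≤ 0 :=
    nonpos_of_mul_nonpos_right (hcompl.trans (mul_nonpos_of_nonneg_of_nonpos (by positivity) hkept))
      (by exact_mod_cast hS.card_pos)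
  linarith

theorem card_mul_sum_sq_sub_truncateSpread_le (htop : ∀ i ∈ S, ∀ j ∉ S, f j ≤ f i) (hf : 0 ≤ f)
    (hS : S.Nonempty) :
    #S * ∑ i, (f i - truncateSpread S f i) ^ 2 ≤ (∑ j ∈ Sᶜ, f j) * ∑ i, f i := by
  set s := ∑ j ∈ Sᶜ, f j
  have hS' : (#S : ℝ) ≠ 0 := by exact_mod_cast hS.card_pos.ne'
  have herr :
      ∑ i, (f i - truncateSpread S f i) ^ 2 = #S * (s / #S) ^ 2 + ∑ j ∈ Sᶜ, f j ^ 2 := by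
    rw [← sum_add_sum_compl S]
    congr 1
    · rw [sum_congr (g := fun _ => (s / #S) ^ 2) rfl fun i hi => by
        rw [truncateSpread, if_pos hi]; ring]
      rw [sum_const, nsmul_eq_mul]
    · exact sum_congr rfl fun j hj => by rw [truncateSpread, if_neg (mem_compl.1 hj)]; ring
  have htail : #S * ∑ j ∈ Sᶜ, f j ^ 2 ≤ s * ∑ i ∈ S, f i := by
    rw [mul_sum, sum_mul]
    refine sum_le_sum fun j hj => ?_
    have := mul_le_mul_of_nonneg_left (card_mul_le_sum_of_notMem htop (mem_compl.1 hj)) (hf j)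
    linarith
  rw [herr, ← sum_add_sum_compl S f]
  field_simp
  nlinarith [htail]

theorem sum_sq_sub_truncateSpread_lt (htop : ∀ i ∈ S, ∀ j ∉ S, f j ≤ f i) (hf : 0 ≤ f)
    (hS : S.Nonempty) {ε : ℝ} (hε : 0 < ε)    (hcard : (∑ i, f i) ^ 2 ≤ #S * ε ^ 2) :
    ∑ i, (f i - truncateSpread S f i) ^ 2 < ε ^ 2 := by
  have hS' : (0 : ℝ) < #S := by exact_mod_cast hS.card_pos
  refine lt_of_mul_lt_mul_left ?_ hS'.le
  refine (card_mul_sum_sq_sub_truncateSpread_le htop hf hS).trans_lt ?_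
  rcases (sum_nonneg fun i _ => hf i : 0 ≤ ∑ i, f i).eq_or_lt with h0 | hpos
  · rw [← h0, mul_zero]; positivity
  · calc (∑ j ∈ Sᶜ, f j) * ∑ i, f i < (∑ i, f i) * ∑ i, f i := by
          gcongr; exact sum_compl_lt_sum htop hS hpos
      _ ≤ #S * ε ^ 2 := by rw [← sq]; exact hcard

end Finset

open Matrix Unitary
open scoped ComplexOrder

namespace Matrix.IsHermitian

variable {𝕜 n : Type*} [RCLike 𝕜] [Fintype n] [DecidableEq n] {A : Matrix n n 𝕜}
  (hA : A.IsHermitian)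

noncomputable def withEigenvalues (ν : n → ℝ) : Matrix n n 𝕜 :=
  conjStarAlgAut 𝕜 _ hA.eigenvectorUnitary (diagonal (RCLike.ofReal ∘ ν))

theorem withEigenvalues_eigenvalues : hA.withEigenvalues hA.eigenvalues = A :=
  hA.spectral_theorem.symm

theorem withEigenvalues_sub (μ ν : n → ℝ) :
    hA.withEigenvalues μ - hA.withEigenvalues ν = hA.withEigenvalues (μ - ν) := by
  simp only [withEigenvalues, ← map_sub, diagonal_sub]
  congr 2
  ext i
  simp

theorem withEigenvalues_mul (μ ν : n → ℝ) :
    hA.withEigenvalues μ * hA.withEigenvalues ν = hA.withEigenvalues (μ * ν) := by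
  simp only [withEigenvalues, ← map_mul, diagonal_mul_diagonal]
  congr 2
  ext i
  simp

theorem trace_withEigenvalues (ν : n → ℝ) : (hA.withEigenvalues ν).trace = ∑ i, (ν i : 𝕜) := by
  rw [withEigenvalues, conjStarAlgAut_apply, trace_mul_cycle, coe_star_mul_self, one_mul,
    trace_diagonal]
  rfl

theorem rank_withEigenvalues (ν : n → ℝ) :
    (hA.withEigenvalues ν).rank = Fintype.card {i // ν i ≠ 0} := by
  have hU := hA.eigenvectorUnitary.2
  rw [withEigenvalues, conjStarAlgAut_apply,
    rank_mul_eq_left_of_isUnit_det _ _ (isUnit_det_of_left_inverse (mem_unitaryGroup_iff.1 hU)),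
    rank_mul_eq_right_of_isUnit_det _ _ (isUnit_det_of_left_inverse (mem_unitaryGroup_iff'.1 hU)),
    rank_diagonal]
  simp

theorem posSemidef_withEigenvalues {ν : n → ℝ} (hν : 0 ≤ ν) :
    (hA.withEigenvalues ν).PosSemidef := by
  rw [withEigenvalues, conjStarAlgAut_apply, star_eq_conjTranspose]
  exact (posSemidef_diagonal_iff.2 fun i => by simpa using hν i).mul_mul_conjTranspose_same _

end Matrix.IsHermitian

theorem psd_low_rank_approx {d : ℕ} (A : Matrix (Fin d) (Fin d) ℝ)
    (hA : A.PosSemidef) (ε : ℝ) (hε : 0 < ε) :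
    ∃ B : Matrix (Fin d) (Fin d) ℝ, B.PosSemidef ∧ B.trace = A.trace ∧
      Real.sqrt (((A - B) * (A - B)).trace) < ε ∧
      B.rank ≤ ⌈A.trace ^ 2 / ε ^ 2⌉₊ := by
  set k := ⌈A.trace ^ 2 / ε ^ 2⌉₊
  by_cases hrank : A.rank ≤ k
  · exact ⟨A, hA, rfl, by simpa using hε, hrank⟩
  have hA0 : A ≠ 0 := by rintro rfl; simp at hrank
  have htr : 0 < A.trace := hA.trace_nonneg.lt_of_ne fun h => hA0 (hA.trace_eq_zero_iff.1 h.symm)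
  have hk : k ≤ Fintype.card (Fin d) := by
    have := A.rank_le_card_width; simp only [Fintype.card_fin] at this ⊢; omega
  obtain ⟨S, hS, htop⟩ := exists_card_eq_forall_notMem_le hA.1.eigenvalues hk
  have hSne : S.Nonempty := by
    rw [← card_pos, hS]; exact Nat.ceil_pos.2 (by positivity)
  have hcard : A.trace ^ 2 ≤ #S * ε ^ 2 := by
    rw [hS, ← div_le_iff₀ (by positivity)]; exact Nat.le_ceil _
  have htrA : A.trace = ∑ i, hA.1.eigenvalues i := by simpa using hA.1.trace_eq_sum_eigenvalues
  set ν := truncateSpread S hA.1.eigenvalues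
  refine ⟨hA.1.withEigenvalues ν, hA.1.posSemidef_withEigenvalues
    (truncateSpread_nonneg hA.eigenvalues_nonneg), ?_, ?_, ?_⟩
  · simpa [hA.1.trace_withEigenvalues, htrA] using sum_truncateSpread hSne
  · have hdiff : A - hA.1.withEigenvalues ν = hA.1.withEigenvalues (hA.1.eigenvalues - ν) := by
      rw [← hA.1.withEigenvalues_sub, hA.1.withEigenvalues_eigenvalues]
    rw [hdiff, hA.1.withEigenvalues_mul, hA.1.trace_withEigenvalues, Real.sqrt_lt' hε]
    simpa [sq] using sum_sq_sub_truncateSpread_lt htop hA.eigenvalues_nonneg hSne hε (htrA ▸ hcard)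
  · rw [hA.1.rank_withEigenvalues, ← hS]
    exact card_truncateSpread_ne_zero_le
end

section
/- If Q : ℝ^d → ℝ^r is linear and u₁,…,u_m ∈ ℝ^d are unit vectors satisfying |u_iᵗu_j − (Qu_i)ᵗ(Qu_j)| ≤ 3ε for all i,j (with 0 < ε < 1), then for any psd matrices A = Σ_k λ_k u_k u_kᵗ and B = Σ_{k'} μ_{k'} u_{k'} u_{k'}ᵗ with λ_k, μ_{k'} ≥ 0, the matrices A'' = Σ_k λ_k (Qu_k)(Qu_k)ᵗ and B'' = Σ_{k'} μ_{k'} (Qu_{k'})(Qu_{k'})ᵗ satisfy |tr(AB) − tr(A''B'')| ≤ (6ε + 9ε²)·tr(A)·tr(B). -/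
/-! The trace of a product of two such sums of rank-one projections is the double sum
`∑ k, ∑ l, λ_k μ_l (u_kᵗu_l)²`, and replacing `u` by `Qu` changes each inner product by at most
`3ε`, hence each square by at most `3ε (2 + 3ε)` because `|u_kᵗu_l| ≤ 1`. The traces of `A` and
`B` are `∑ λ_k` and `∑ μ_l` since the `u_k` are unit vectors. -/

open Matrix Finset

section Trace

variable {ι n R : Type*} [Fintype ι] [Fintype n] [CommRing R]

theorem Matrix.trace_vecMulVec_self_mul_vecMulVec_self (v w : n → R) :
    (vecMulVec v v * vecMulVec w w).trace = (v ⬝ᵥ w) ^ 2 := by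
  rw [vecMulVec_mul_vecMulVec, trace_vecMulVec, dotProduct_smul, smul_eq_mul, sq]

theorem Matrix.trace_sum_smul_vecMulVec_self (c : ι → R) (v : ι → n → R) :
    (∑ k, c k • vecMulVec (v k) (v k)).trace = ∑ k, c k * (v k ⬝ᵥ v k) := by
  simp only [trace_sum, trace_smul, trace_vecMulVec, smul_eq_mul]

theorem Matrix.trace_sum_smul_vecMulVec_self_mul (c e : ι → R) (v : ι → n → R) :
    ((∑ k, c k • vecMulVec (v k) (v k)) * ∑ l, e l • vecMulVec (v l) (v l)).trace =
      ∑ k, ∑ l, c k * e l * (v k ⬝ᵥ v l) ^ 2 := by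
  simp only [sum_mul_sum, trace_sum, smul_mul_smul_comm, trace_smul,
    trace_vecMulVec_self_mul_vecMulVec_self, smul_eq_mul]

end Trace

section Estimates

variable {R : Type*} [CommRing R] [LinearOrder R] [IsStrictOrderedRing R]

theorem abs_dotProduct_le_one {n : Type*} [Fintype n] {v w : n → R}
    (hv : ∑ i, v i ^ 2 = 1) (hw : ∑ i, w i ^ 2 = 1) : |v ⬝ᵥ w| ≤ 1 := by
  rw [← sq_le_one_iff_abs_le_one]
  simpa [dotProduct, hv, hw] using sum_mul_sq_le_sq_mul_sq univ v w

theorem abs_sq_sub_sq_le {a b δ : R} (ha : |a| ≤ 1) (hab : |a - b| ≤ δ) :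
    |a ^ 2 - b ^ 2| ≤ δ * (2 + δ) := by
  have hsum : |a + b| ≤ 2 + δ :=
    calc |a + b| = |2 * a - (a - b)| := by ring_nf
      _ ≤ |2 * a| + |a - b| := abs_sub _ _
      _ ≤ 2 + δ := by rw [abs_mul, abs_two]; linarith
  calc |a ^ 2 - b ^ 2| = |a - b| * |a + b| := by rw [← abs_mul]; ring_nf
    _ ≤ δ * (2 + δ) := mul_le_mul hab hsum (abs_nonneg _) ((abs_nonneg _).trans hab)

theorem abs_sum_sum_mul_sub_le {ι : Type*} [Fintype ι] {c e : ι → R} (hc : ∀ k, 0 ≤ c k)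
    (he : ∀ l, 0 ≤ e l) {f g : ι → ι → R} {δ : R} (hfg : ∀ k l, |f k l - g k l| ≤ δ) :
    |∑ k, ∑ l, c k * e l * f k l - ∑ k, ∑ l, c k * e l * g k l| ≤
      δ * (∑ k, c k) * ∑ l, e l :=
  calc |∑ k, ∑ l, c k * e l * f k l - ∑ k, ∑ l, c k * e l * g k l|
      = |∑ k, ∑ l, c k * e l * (f k l - g k l)| := by simp only [mul_sub, sum_sub_distrib]
    _ ≤ ∑ k, ∑ l, c k * e l * δ := by
      refine (abs_sum_le_sum_abs _ _).trans <| sum_le_sum fun k _ =>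
        (abs_sum_le_sum_abs _ _).trans <| sum_le_sum fun l _ => ?_
      rw [abs_mul, abs_of_nonneg (mul_nonneg (hc k) (he l))]
      exact mul_le_mul_of_nonneg_left (hfg k l) (mul_nonneg (hc k) (he l))
    _ = δ * (∑ k, c k) * ∑ l, e l := by
      rw [mul_assoc, sum_mul_sum]
      simp only [mul_sum]
      exact sum_congr rfl fun _ _ => sum_congr rfl fun _ _ => by ring

end Estimates

theorem jl_trace_perturbation_general {d r m : ℕ}
    (Q : Matrix (Fin r) (Fin d) ℝ) (u : Fin m → (Fin d → ℝ))
    (hu : ∀ k, (∑ l, u k l ^ 2) = 1)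
    (ε : ℝ)
    (hQ : ∀ i j, |dotProduct (u i) (u j) - dotProduct (Q.mulVec (u i)) (Q.mulVec (u j))| ≤ 3 * ε)
    (lam mu : Fin m → ℝ) (hlam : ∀ k, 0 ≤ lam k) (hmu : ∀ k, 0 ≤ mu k)
    (A B : Matrix (Fin d) (Fin d) ℝ) (A2 B2 : Matrix (Fin r) (Fin r) ℝ)
    (hA : A = ∑ k, lam k • Matrix.vecMulVec (u k) (u k))
    (hB : B = ∑ k, mu k • Matrix.vecMulVec (u k) (u k))
    (hA2 : A2 = ∑ k, lam k • Matrix.vecMulVec (Q.mulVec (u k)) (Q.mulVec (u k)))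
    (hB2 : B2 = ∑ k, mu k • Matrix.vecMulVec (Q.mulVec (u k)) (Q.mulVec (u k))) :
    |(A * B).trace - (A2 * B2).trace| ≤ (6 * ε + 9 * ε ^ 2) * A.trace * B.trace := by
  subst hA hB hA2 hB2
  have hunit : ∀ k, u k ⬝ᵥ u k = 1 := fun k => by simpa [dotProduct, sq] using hu k
  rw [trace_sum_smul_vecMulVec_self_mul, trace_sum_smul_vecMulVec_self_mul,
    trace_sum_smul_vecMulVec_self, trace_sum_smul_vecMulVec_self]
  simp only [hunit, mul_one]
  exact (abs_sum_sum_mul_sub_le hlam hmu fun k l =>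
    abs_sq_sub_sq_le (abs_dotProduct_le_one (hu k) (hu l)) (hQ k l)).trans_eq (by ring)

theorem jl_trace_perturbation {d r m : ℕ}
    (Q : Matrix (Fin r) (Fin d) ℝ) (u : Fin m → (Fin d → ℝ))
    (hu : ∀ k, (∑ l, u k l ^ 2) = 1)
    (ε : ℝ) (hε0 : 0 < ε) (hε1 : ε < 1)
    (hQ : ∀ i j, |dotProduct (u i) (u j) - dotProduct (Q.mulVec (u i)) (Q.mulVec (u j))| ≤ 3 * ε)
    (lam mu : Fin m → ℝ) (hlam : ∀ k, 0 ≤ lam k) (hmu : ∀ k, 0 ≤ mu k)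
    (A B : Matrix (Fin d) (Fin d) ℝ) (A2 B2 : Matrix (Fin r) (Fin r) ℝ)
    (hA : A = ∑ k, lam k • Matrix.vecMulVec (u k) (u k))
    (hB : B = ∑ k, mu k • Matrix.vecMulVec (u k) (u k))
    (hA2 : A2 = ∑ k, lam k • Matrix.vecMulVec (Q.mulVec (u k)) (Q.mulVec (u k)))
    (hB2 : B2 = ∑ k, mu k • Matrix.vecMulVec (Q.mulVec (u k)) (Q.mulVec (u k))) :
    |(A * B).trace - (A2 * B2).trace| ≤ (6 * ε + 9 * ε ^ 2) * A.trace * B.trace :=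
  jl_trace_perturbation_general Q u hu ε hQ lam mu hlam hmu A B A2 B2 hA hB hA2 hB2
end
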